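/- arXiv:1211.3585 — 7 statements merged into one kernel-verified Lean document; each statement's English description precedes it below -/
import Mathlib

section
/- Let E be a real Hilbert space and let f : E → E be continuously differentiable with f'(u) self-adjoint for every u ∈ E. Define H : E → ℝ by H(u) = ∫₀¹ ⟨f(λ•u), u⟩ dλ. Then H is differentiable at every u ∈ E and its derivative satisfies H'(u)[g] = ⟨f(u), g⟩ for all g ∈ E; that is, f is the gradient of the potential H. -/
/-!
Differentiating under the integral sign is legitimate because the `x`-derivative of
`⟪f (t • x), x⟫` is jointly continuous in `(x, t)`, hence bounded near `u` uniformly in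
`t ∈ [0, 1]`. This gives `H'(u)[g] = ∫₀¹ ⟪f (t • u), g⟫ + t ⟪u, f'(t • u) g⟫ dt`. Self-adjointness
turns `⟪u, f'(t • u) g⟫` into `⟪f'(t • u) u, g⟫`, so the integrand is `⟪d/dt (t • f (t • u)), g⟫`
and the integral telescopes to `⟪f u, g⟫`.
-/

open Topology Set
open scoped InnerProductSpace

theorem IsCompact.exists_eventually_forall_norm_le {X Y F : Type*} [TopologicalSpace X]
    [TopologicalSpace Y] [SeminormedAddCommGroup F] {g : X → Y → F}
    (hg : Continuous (Function.uncurry g)) {K : Set Y} (hK : IsCompact K) (x₀ : X) :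
    ∃ C, ∀ᶠ x in 𝓝 x₀, ∀ y ∈ K, ‖g x y‖ ≤ C := by
  obtain ⟨C, hC⟩ := hK.exists_bound_of_continuousOn
    (hg.comp (Continuous.prodMk_right x₀)).continuousOn
  refine ⟨C + 1, hK.eventually_forall_of_forall_eventually fun y hy => ?_⟩
  have hlt : ∀ᶠ z in 𝓝 (x₀, y), ‖Function.uncurry g z‖ < C + 1 :=
    hg.norm.continuousAt.eventually_lt continuousAt_const ((hC y hy).trans_lt (lt_add_one C))
  exact hlt.mono fun z hz => hz.le

theorem hasFDerivAt_intervalIntegral_of_continuous_fderiv {H E : Type*} [NormedAddCommGroup H]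
    [NormedSpace ℝ H] [NormedAddCommGroup E] [NormedSpace ℝ E] {F : H → ℝ → E}
    {F' : H → ℝ → H →L[ℝ] E} {a b : ℝ} (x₀ : H) (hF : ∀ x, Continuous (F x))
    (hF' : Continuous (Function.uncurry F'))
    (hdiff : ∀ x t, HasFDerivAt (fun y => F y t) (F' x t) x) :
    HasFDerivAt (fun x => ∫ t in a..b, F x t) (∫ t in a..b, F' x₀ t) x₀ := by
  obtain ⟨C, hC⟩ := isCompact_uIcc.exists_eventually_forall_norm_le hF' x₀
  obtain ⟨s, hs, hCs⟩ := hC.exists_mem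
  exact intervalIntegral.hasFDerivAt_integral_of_dominated_of_fderiv_le (bound := fun _ => C) hs
    (.of_forall fun x => (hF x).aestronglyMeasurable) ((hF x₀).intervalIntegrable a b)
    (hF'.comp (Continuous.prodMk_right x₀)).aestronglyMeasurable
    (.of_forall fun t ht x hx => hCs x hx t (uIoc_subset_uIcc ht)) intervalIntegrable_const
    (.of_forall fun t _ x _ => hdiff x t)

section Potential

variable {E : Type*} [NormedAddCommGroup E] [InnerProductSpace ℝ E]

noncomputable def potential (f : E → E) (u : E) : ℝ := ∫ t in (0 : ℝ)..1, ⟪f (t • u), u⟫_ℝ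

variable {f : E → E} {f' : E → E →L[ℝ] E}

theorem hasFDerivAt_inner_comp_smul (hf : ∀ x, HasFDerivAt f (f' x) x) (t : ℝ) (x : E) :
    HasFDerivAt (fun y => ⟪f (t • y), y⟫_ℝ)
      (innerSL ℝ (f (t • x)) + t • (innerSL ℝ x).comp (f' (t • x))) x := by
  have hft : HasFDerivAt (fun y => f (t • y)) ((f' (t • x)).comp (t • .id ℝ E)) x :=
    (hf (t • x)).comp x ((hasFDerivAt_id x).const_smul t)
  refine (hft.inner ℝ (hasFDerivAt_id x)).congr_fderiv ?_
  ext g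
  simp [real_inner_comm, real_inner_smul_right]

theorem hasDerivAt_smul_comp_smul (hf : ∀ x, HasFDerivAt f (f' x) x) (u : E) (t : ℝ) :
    HasDerivAt (fun s : ℝ => s • f (s • u)) (f (t • u) + t • f' (t • u) u) t := by
  have hfu : HasDerivAt (fun s : ℝ => f (s • u)) (f' (t • u) u) t := by
    simpa [Function.comp_def] using
      (hf (t • u)).comp_hasDerivAt t ((hasDerivAt_id' t).smul_const u)
  simpa [add_comm] using (hasDerivAt_id' t).fun_smul hfu

theorem integral_add_smul_fderiv_comp_smul [CompleteSpace E] (hf : ∀ x, HasFDerivAt f (f' x) x)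
    (hf' : Continuous f') (u : E) :
    ∫ t in (0 : ℝ)..1, (f (t • u) + t • f' (t • u) u) = f u := by
  have hcont : Continuous f := Differentiable.continuous fun x => (hf x).differentiableAt
  rw [intervalIntegral.integral_eq_sub_of_hasDerivAt (fun t _ => hasDerivAt_smul_comp_smul hf u t)
    (Continuous.intervalIntegrable (by fun_prop) _ _)]
  simp

theorem integral_fderiv_inner_comp_smul [CompleteSpace E] (hf : ∀ x, HasFDerivAt f (f' x) x)
    (hf' : Continuous f') (hself : ∀ x, IsSelfAdjoint (f' x)) (u : E) :
    ∫ t in (0 : ℝ)..1, (innerSL ℝ (f (t • u)) + t • (innerSL ℝ u).comp (f' (t • u))) =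
      innerSL ℝ (f u) := by
  have hcont : Continuous f := Differentiable.continuous fun x => (hf x).differentiableAt
  calc ∫ t in (0 : ℝ)..1, (innerSL ℝ (f (t • u)) + t • (innerSL ℝ u).comp (f' (t • u)))
      = ∫ t in (0 : ℝ)..1, innerSL ℝ (f (t • u) + t • f' (t • u) u) := by
        refine intervalIntegral.integral_congr fun t _ => ?_
        simp [ContinuousLinearMap.innerSL_apply_comp_of_isSymmetric _ (hself _).isSymmetric]
    _ = innerSL ℝ (∫ t in (0 : ℝ)..1, (f (t • u) + t • f' (t • u) u)) :=
        (innerSL ℝ).intervalIntegral_comp_comm (Continuous.intervalIntegrable (by fun_prop) _ _)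
    _ = innerSL ℝ (f u) := by rw [integral_add_smul_fderiv_comp_smul hf hf']

theorem hasFDerivAt_potential [CompleteSpace E] (hf : ∀ x, HasFDerivAt f (f' x) x)
    (hf' : Continuous f') (hself : ∀ x, IsSelfAdjoint (f' x)) (u : E) :
    HasFDerivAt (potential f) (innerSL ℝ (f u)) u := by
  have hcont : Continuous f := Differentiable.continuous fun x => (hf x).differentiableAt
  have hder := hasFDerivAt_intervalIntegral_of_continuous_fderiv (a := 0) (b := 1) u
    (fun x => by fun_prop) (by fun_prop) fun x t => hasFDerivAt_inner_comp_smul hf t x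
  rwa [integral_fderiv_inner_comp_smul hf hf' hself] at hder

end Potential

/-- If `f : E → E` is `C¹` with self-adjoint Fréchet derivative everywhere, then
`H(u) = ∫₀¹ ⟨f(λ•u), u⟩ dλ` is differentiable with `H'(u)[g] = ⟨f(u), g⟩`:
`f` is the gradient of the potential `H`. -/
theorem gradient_of_potential {E : Type*} [NormedAddCommGroup E] [InnerProductSpace ℝ E]
    [CompleteSpace E] (f : E → E) (hf : ContDiff ℝ 1 f)
    (hself : ∀ u : E, ContinuousLinearMap.adjoint (fderiv ℝ f u) = fderiv ℝ f u)
    (H : E → ℝ)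
    (hH : ∀ u : E, H u = ∫ t in (0:ℝ)..1, (inner ℝ (f (t • u)) u : ℝ)) :
    ∀ u : E, HasFDerivAt H (innerSL ℝ (f u)) u := by
  obtain rfl : H = potential f := funext hH
  exact hasFDerivAt_potential (fun x => (hf.differentiable one_ne_zero x).hasFDerivAt)
    (hf.continuous_fderiv one_ne_zero) hself
end

section
/- Let E be a real Hilbert space and let K, γ : E → E be continuously differentiable maps with K(0) = 0, γ(0) = 0, and with γ'(u) self-adjoint for every u ∈ E (so γ is a gradient function). Then ⟨γ(u), K(u)⟩ = 0 for all u ∈ E if and only if γ'(u)[K(u)] + (K'(u))*[γ(u)] = 0 for all u ∈ E. (This is the time-independent form of the equivalence: the potential of γ is a conserved quantity of the autonomous evolution equation u_t = K(u) if and only if γ is a conserved covariant of it.) -/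
/-!
Since `γ'(u)` is self-adjoint, the derivative `h ↦ ⟪γ'(u) h, K u⟫ + ⟪γ u, K'(u) h⟫` of
`I(u) = ⟪γ u, K u⟫` is `⟪γ'(u)[K u] + K'(u)*[γ u], h⟫`, i.e. the conserved-covariant expression
is the gradient of `I`. As `I(0) = 0`, `I` vanishes identically iff its gradient does.
-/

section

open ContinuousLinearMap

variable {E : Type*} [NormedAddCommGroup E] [InnerProductSpace ℝ E] [CompleteSpace E]

theorem hasGradientAt_inner_of_isSelfAdjoint {γ K : E → E} {γ' K' : E →L[ℝ] E}
    {u : E} (hγ : HasFDerivAt γ γ' u) (hK : HasFDerivAt K K' u) (hself : IsSelfAdjoint γ') :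
    HasGradientAt (fun v => inner ℝ (γ v) (K v)) (γ' (K u) + adjoint K' (γ u)) u := by
  rw [hasGradientAt_iff_hasFDerivAt]
  refine (hγ.inner ℝ hK).congr_fderiv (ContinuousLinearMap.ext fun h => ?_)
  rw [isSelfAdjoint_iff'] at hself
  simp only [coe_comp, Function.comp_apply, prod_apply, fderivInnerCLM_apply,
    InnerProductSpace.toDual_apply_apply, inner_add_left, adjoint_inner_left]
  rw [← adjoint_inner_right γ' h, hself, real_inner_comm _ h, add_comm]

theorem forall_eq_zero_iff_of_hasGradientAt {f : E → ℝ} {g : E → E}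
    (hf : ∀ u, HasGradientAt f (g u) u) (hf0 : f 0 = 0) :
    (∀ u, f u = 0) ↔ ∀ u, g u = 0 := by
  constructor
  · intro hzero u
    have hconst : f = fun _ => 0 := funext hzero
    exact (hf u).unique (hconst ▸ hasGradientAt_const u 0)
  · intro hgrad u
    have hfderiv : ∀ v, fderiv ℝ f v = 0 := fun v => by
      rw [(hf v).hasFDerivAt.fderiv, hgrad v, map_zero]
    rw [is_const_of_fderiv_eq_zero (fun v => (hf v).differentiableAt) hfderiv u 0, hf0]

end

theorem conserved_iff_conservedCovariant_general {E : Type*} [NormedAddCommGroup E]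
    [InnerProductSpace ℝ E] [CompleteSpace E]
    (K γ : E → E) (hK : ContDiff ℝ 1 K) (hγ : ContDiff ℝ 1 γ)
    (hK0 : K 0 = 0)
    (hself : ∀ u : E, ContinuousLinearMap.adjoint (fderiv ℝ γ u) = fderiv ℝ γ u) :
    (∀ u : E, (inner ℝ (γ u) (K u) : ℝ) = 0) ↔
      (∀ u : E, fderiv ℝ γ u (K u) + ContinuousLinearMap.adjoint (fderiv ℝ K u) (γ u) = 0) := by
  have hgrad (u : E) := hasGradientAt_inner_of_isSelfAdjoint
    (hγ.differentiable one_ne_zero u).hasFDerivAt (hK.differentiable one_ne_zero u).hasFDerivAt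
    (hself u)
  exact forall_eq_zero_iff_of_hasGradientAt hgrad (by rw [hK0, inner_zero_right])

/-- Time-independent form of the equivalence between conserved quantities and conserved
covariants: for `C¹` maps `K, γ : E → E` with `K(0) = 0`, `γ(0) = 0` and `γ'(u)`
self-adjoint for every `u` (so `γ` is a gradient function), one has
`⟨γ(u), K(u)⟩ = 0` for all `u` iff `γ'(u)[K(u)] + K'(u)*[γ(u)] = 0` for all `u`. -/
theorem conserved_iff_conservedCovariant {E : Type*} [NormedAddCommGroup E]
    [InnerProductSpace ℝ E] [CompleteSpace E]
    (K γ : E → E) (hK : ContDiff ℝ 1 K) (hγ : ContDiff ℝ 1 γ)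
    (hK0 : K 0 = 0) (hγ0 : γ 0 = 0)
    (hself : ∀ u : E, ContinuousLinearMap.adjoint (fderiv ℝ γ u) = fderiv ℝ γ u) :
    (∀ u : E, (inner ℝ (γ u) (K u) : ℝ) = 0) ↔
      (∀ u : E, fderiv ℝ γ u (K u) + ContinuousLinearMap.adjoint (fderiv ℝ K u) (γ u) = 0) :=
  conserved_iff_conservedCovariant_general K γ hK hγ hK0 hself
end

section
/- Let E be a real Hilbert space and let D : E → E be a continuous linear equivalence (invertible with continuous inverse) whose adjoint satisfies D* = −D. Let γ, σ : E → E be differentiable maps such that γ'(u) is self-adjoint for every u and σ'(u) ∘ D + D ∘ (σ'(u))* = 0 for every u (D is a Noether operator for σ). Then for every u ∈ E: D⁻¹( (D∘γ)'(u)[σ(u)] − σ'(u)[D(γ(u))] ) = γ'(u)[σ(u)] + (σ'(u))*[γ(u)]. In other words, D⁻¹⟦D∘γ, σ⟧(u) equals grad⟨γ, σ⟩(u): applying D⁻¹ to the Lie product of the flow D∘γ with σ again produces a gradient function. -/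
/-- Key inductive step for Hamiltonian structures: if `D` is an invertible skew-adjoint
continuous linear operator, `γ'(u)` is self-adjoint for every `u`, and `D` is a Noether
operator for `σ` (i.e. `σ'(u) ∘ D + D ∘ σ'(u)* = 0`), then
`D⁻¹((D∘γ)'(u)[σ(u)] − σ'(u)[D(γ(u))]) = γ'(u)[σ(u)] + σ'(u)*[γ(u)]`,
i.e. `D⁻¹⟦D∘γ, σ⟧(u) = grad⟨γ, σ⟩(u)`. -/
theorem inv_noether_lie_product_is_gradient {E : Type*} [NormedAddCommGroup E]
    [InnerProductSpace ℝ E] [CompleteSpace E]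
    (D : E ≃L[ℝ] E)
    (hD : ContinuousLinearMap.adjoint (D : E →L[ℝ] E) = -(D : E →L[ℝ] E))
    (γ σ : E → E) (hγ : Differentiable ℝ γ) (hσ : Differentiable ℝ σ)
    (hγself : ∀ u : E, ContinuousLinearMap.adjoint (fderiv ℝ γ u) = fderiv ℝ γ u)
    (hσN : ∀ u : E, (fderiv ℝ σ u).comp (D : E →L[ℝ] E) +
      (D : E →L[ℝ] E).comp (ContinuousLinearMap.adjoint (fderiv ℝ σ u)) = 0) :
    ∀ u : E,
      D.symm ((fderiv ℝ (fun v => D (γ v)) u) (σ u) - (fderiv ℝ σ u) (D (γ u))) =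
        fderiv ℝ γ u (σ u) + ContinuousLinearMap.adjoint (fderiv ℝ σ u) (γ u) := by
  intro u
  have h1 : fderiv ℝ (fun v => D (γ v)) u = (D : E →L[ℝ] E).comp (fderiv ℝ γ u) := by
    exact ((D : E →L[ℝ] E).hasFDerivAt.comp u (hγ u).hasFDerivAt).fderiv
  have h2 : (fderiv ℝ σ u) (D (γ u)) =
      -(D ((ContinuousLinearMap.adjoint (fderiv ℝ σ u)) (γ u))) := by
    have := congrArg (fun T => T (γ u)) (hσN u)
    simpa [eq_neg_iff_add_eq_zero] using this
  rw [h1, h2]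
  simp [map_add]
end

section
/- Let m be a natural number, let u : ℝ² → ℝ be smooth, let a₀, …, a_m be Schwartz functions on ℝ² (coordinates (x, y)), and let X : ℝ² → ℝ be any function. Define, for every smooth φ : ℝ² → ℝ: (Nφ) = Σ_{j=0}^{m} a_j · ∂_x^{m−j} φ, (N_y φ) = Σ_{j=0}^{m} (∂_y a_j) · ∂_x^{m−j} φ, and (A₂φ) = ∂_x² φ + 2uφ. If for every smooth φ : ℝ² → ℝ the identity 2Xφ − N_y φ + A₂(Nφ) − N(A₂φ) = 0 holds pointwise on ℝ², then X ≡ 0 and a_j ≡ 0 for every j = 0, …, m. -/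
/-- Partial derivative in the first coordinate. -/
noncomputable def pdx (f : ℝ × ℝ → ℝ) : ℝ × ℝ → ℝ := fun p => fderiv ℝ f p (1, 0)

/-- Partial derivative in the second coordinate. -/
noncomputable def pdy (f : ℝ × ℝ → ℝ) : ℝ × ℝ → ℝ := fun p => fderiv ℝ f p (0, 1)

/-- The differential operator `N = Σ_{j=0}^{m} a_j ∂_x^{m−j}`. -/
noncomputable def Nop (m : ℕ) (a : Fin (m + 1) → ℝ × ℝ → ℝ) (φ : ℝ × ℝ → ℝ) : ℝ × ℝ → ℝ :=
  fun p => ∑ j : Fin (m + 1), a j p * (pdx^[m - (j : ℕ)] φ) p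

/-- The operator `A₂ = ∂_x² + 2u`. -/
noncomputable def A2op (u φ : ℝ × ℝ → ℝ) : ℝ × ℝ → ℝ :=
  fun p => pdx (pdx φ) p + 2 * u p * φ p

open ContDiff Finset

lemma pdx_smooth {f : ℝ×ℝ→ℝ} (hf : ContDiff ℝ ∞ f) : ContDiff ℝ ∞ (pdx f) :=
  (hf.fderiv_right (le_refl _)).clm_apply contDiff_const

lemma pdx_add {f g : ℝ×ℝ→ℝ} {p} (hf : DifferentiableAt ℝ f p) (hg : DifferentiableAt ℝ g p) :
    pdx (fun q => f q + g q) p = pdx f p + pdx g p := by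
  simp [pdx, fderiv_fun_add hf hg]

lemma pdx_mul {f g : ℝ×ℝ→ℝ} {p} (hf : DifferentiableAt ℝ f p) (hg : DifferentiableAt ℝ g p) :
    pdx (fun q => f q * g q) p = pdx f p * g p + f p * pdx g p := by
  simp [pdx, fderiv_fun_mul hf hg]; ring

lemma pdx_zero : pdx (fun _ => (0:ℝ)) = fun _ => 0 := by
  funext p; simp [pdx]

lemma pdx_const (c : ℝ) : pdx (fun _ => c) = fun _ => 0 := by
  funext p; simp [pdx]

lemma pdx_of_eq_zero {f : ℝ×ℝ→ℝ} (h : ∀ q, f q = 0) : ∀ p, pdx f p = 0 := by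
  have : f = fun _ => 0 := funext h
  rw [this, pdx_zero]; intro p; rfl

lemma pdy_of_eq_zero {f : ℝ×ℝ→ℝ} (h : ∀ q, f q = 0) : ∀ p, pdy f p = 0 := by
  have : f = fun _ => 0 := funext h
  subst this; intro p; simp [pdy]

lemma pdx_sum {ι : Type*} {s : Finset ι} {F : ι → ℝ×ℝ → ℝ} {p}
    (h : ∀ i ∈ s, DifferentiableAt ℝ (F i) p) :
    pdx (fun q => ∑ i ∈ s, F i q) p = ∑ i ∈ s, pdx (F i) p := by
  simp only [pdx]
  rw [fderiv_fun_sum h]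
  simp

lemma pdx_mul_const {f : ℝ×ℝ→ℝ} {p} (hf : DifferentiableAt ℝ f p) (c : ℝ) :
    pdx (fun q => f q * c) p = pdx f p * c := by
  simp [pdx, fderiv_mul_const hf]; ring

noncomputable def Efn (l : ℝ) : ℝ×ℝ → ℝ := fun p => Real.exp (l * p.1)

lemma Efn_smooth (l : ℝ) (n : WithTop ℕ∞) : ContDiff ℝ n (Efn l) :=
  (Real.contDiff_exp.comp (contDiff_const.mul contDiff_fst)).of_le le_top

lemma Efn_pos (l : ℝ) (p : ℝ×ℝ) : 0 < Efn l p := Real.exp_pos _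

lemma pdx_Efn (l : ℝ) : pdx (Efn l) = fun p => l * Efn l p := by
  funext p
  have h1 : HasFDerivAt (fun q : ℝ×ℝ => l * q.1) (l • (ContinuousLinearMap.fst ℝ ℝ ℝ)) p := by
    exact ((ContinuousLinearMap.fst ℝ ℝ ℝ).hasFDerivAt.const_smul l)
  have h2 := h1.exp
  have h3 : fderiv ℝ (Efn l) p = Real.exp (l * p.1) • l • ContinuousLinearMap.fst ℝ ℝ ℝ :=
    h2.fderiv
  simp [pdx, h3, Efn]; ring

/-- product with exponential, function form -/
lemma pdx_mul_Efn {g : ℝ×ℝ→ℝ} (hg : ContDiff ℝ ∞ g) (l : ℝ) :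
    pdx (fun q => g q * Efn l q) = fun q => (pdx g q + l * g q) * Efn l q := by
  funext p
  rw [pdx_mul (hg.differentiable (by norm_num) p) ((Efn_smooth l ∞).differentiable (by norm_num) p)]
  have := congrFun (pdx_Efn l) p
  rw [this]; ring

lemma pdx_iter_Efn (l : ℝ) : ∀ k : ℕ, pdx^[k] (Efn l) = fun p => l^k * Efn l p := by
  intro k
  induction k with
  | zero => funext p; simp
  | succ n ih =>
    rw [Function.iterate_succ_apply', ih]
    funext p
    rw [show (fun p => l^n * Efn l p) = (fun q => (fun _ : ℝ×ℝ => l^n) q * Efn l q) from rfl,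
      pdx_mul (differentiableAt_const _) ((Efn_smooth l ∞).differentiable (by norm_num) p)]
    have := congrFun (pdx_Efn l) p
    have hc := congrFun (pdx_const (l^n)) p
    rw [this, hc]; ring

lemma pdx2_Efn (l : ℝ) : pdx (pdx (Efn l)) = fun q => l^2 * Efn l q := by
  rw [pdx_Efn]
  funext q
  rw [show (fun p => l * Efn l p) = (fun q => (fun _ : ℝ×ℝ => l) q * Efn l q) from rfl,
    pdx_mul (differentiableAt_const _) ((Efn_smooth l ∞).differentiable (by norm_num) q),
    congrFun (pdx_const l) q, congrFun (pdx_Efn l) q]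
  ring

lemma leib (u : ℝ×ℝ→ℝ) (hu : ContDiff ℝ ∞ u) : ∀ k : ℕ, ∃ c : ℕ → ℝ×ℝ→ℝ,
    (∀ i, ContDiff ℝ ∞ (c i)) ∧ (∀ i, k < i → c i = fun _ => 0) ∧
    ∀ l : ℝ, pdx^[k] (fun q => pdx (pdx (Efn l)) q + 2 * u q * Efn l q)
      = fun q => (l^(k+2) + ∑ i ∈ range (k+1), c i q * l^i) * Efn l q := by
  intro k
  induction k with
  | zero =>
    refine ⟨fun i => if i = 0 then (fun q => 2 * u q) else fun _ => 0, ?_, ?_, ?_⟩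
    · intro i
      by_cases hi : i = 0 <;> simp [hi]
      · exact contDiff_const.mul hu
      · exact contDiff_const
    · intro i hi
      dsimp only
      rw [if_neg (by omega : ¬ i = 0)]
    · intro l; funext q
      simp [congrFun (pdx2_Efn l) q]; ring
  | succ k ih =>
    obtain ⟨c, hc1, hc2, hc3⟩ := ih
    refine ⟨fun i => fun q => pdx (c i) q + (if i = 0 then 0 else c (i-1) q), ?_, ?_, ?_⟩
    · intro i
      refine (pdx_smooth (hc1 i)).add ?_
      split
      · exact contDiff_const
      · exact hc1 (i-1)
    · intro i hi
      have h1 : c i = fun _ => 0 := hc2 i (by omega)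
      have h2 : (if i = 0 then (0:ℝ×ℝ→ℝ) else fun q => c (i-1) q) = fun _ => 0 := by
        split
        · omega
        · exact hc2 (i-1) (by omega)
      funext q
      have h3 := pdx_of_eq_zero (f := c i) (fun q => congrFun h1 q) q
      dsimp only
      rw [h3]
      split
      · simp
      · simp [congrFun (hc2 (i-1) (by omega)) q]
    · intro l
      rw [Function.iterate_succ_apply', hc3 l]
      set S : ℝ×ℝ→ℝ := fun q => ∑ i ∈ range (k+1), c i q * l^i with hS
      have hSsm : ContDiff ℝ ∞ S := ContDiff.sum fun i _ => (hc1 i).mul contDiff_const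
      have hgsm : ContDiff ℝ ∞ (fun q => l^(k+2) + S q) := contDiff_const.add hSsm
      rw [show (fun q => (l ^ (k + 2) + S q) * Efn l q)
          = (fun q => (fun q => l^(k+2) + S q) q * Efn l q) from rfl, pdx_mul_Efn hgsm l]
      funext q
      have hpg : pdx (fun q => l^(k+2) + S q) q = pdx S q := by
        rw [show (fun q => l^(k+2) + S q) = (fun q => (fun _:ℝ×ℝ => l^(k+2)) q + S q) from rfl,
          pdx_add (differentiableAt_const _) (hSsm.differentiable (by norm_num) q),
          congrFun (pdx_const (l^(k+2))) q]
        ring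
      have hpS : pdx S q = ∑ i ∈ range (k+1), pdx (c i) q * l^i := by
        rw [hS, pdx_sum (fun i _ => ((hc1 i).differentiable (by norm_num) q).mul_const _)]
        exact Finset.sum_congr rfl fun i _ =>
          pdx_mul_const ((hc1 i).differentiable (by norm_num) q) _
      rw [hpg, hpS]
      have e1 : ∑ i ∈ range (k+1+1), (pdx (c i) q + if i = 0 then 0 else c (i-1) q) * l^i
          = ∑ i ∈ range (k+2), pdx (c i) q * l^i
            + ∑ i ∈ range (k+2), (if i = 0 then 0 else c (i-1) q) * l^i := by
        rw [← Finset.sum_add_distrib]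
        exact Finset.sum_congr rfl fun i _ => by ring
      have e2 : ∑ i ∈ range (k+2), pdx (c i) q * l^i
          = ∑ i ∈ range (k+1), pdx (c i) q * l^i := by
        rw [Finset.sum_range_succ, pdx_of_eq_zero (fun q => congrFun (hc2 (k+1) (by omega)) q) q]
        ring
      have e3 : ∑ i ∈ range (k+2), (if i = 0 then 0 else c (i-1) q) * l^i
          = ∑ i ∈ range (k+1), c i q * l^(i+1) := by
        rw [Finset.sum_range_succ']
        simp
      rw [e1, e2, e3]
      have h4 : l * (l ^ (k + 2) + S q) = l ^ (k + 1 + 2) + ∑ i ∈ range (k+1), c i q * l ^ (i + 1) := by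
        rw [hS, mul_add, Finset.mul_sum]
        congr 1
        · ring
        · exact Finset.sum_congr rfl fun i _ => by ring
      rw [h4]
      ring

lemma schwartz_pdx_zero (f : SchwartzMap (ℝ×ℝ) ℝ) (h : ∀ p, pdx (⇑f) p = 0) :
    ∀ p, f p = 0 := by
  intro p
  obtain ⟨x, y⟩ := p
  -- f is constant along horizontal lines
  have hdiff : Differentiable ℝ (⇑f) := f.differentiable
  have hconst : ∀ t : ℝ, f (t, y) = f (x, y) := by
    intro t
    have hg : ∀ s : ℝ, HasDerivAt (fun s : ℝ => f (s, y)) 0 s := by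
      intro s
      have hc : HasDerivAt (fun s : ℝ => ((s, y) : ℝ×ℝ)) (1, 0) s :=
        (hasDerivAt_id s).prodMk (hasDerivAt_const s y)
      have h5 := (hdiff (s, y)).hasFDerivAt.comp_hasDerivAt s hc
      have h0 := h (s, y)
      simp only [pdx] at h0
      simpa [Function.comp_def, h0] using h5
    have := is_const_of_deriv_eq_zero (f := fun s : ℝ => f (s, y))
      (fun s => (hg s).differentiableAt) (fun s => (hg s).deriv) t x
    exact this
  -- decay
  by_contra hne
  obtain ⟨C, hC, hdecay⟩ := f.decay 1 0
  have key : ∀ t : ℝ, ‖(t, y)‖ * ‖f (x, y)‖ ≤ C := by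
    intro t
    have := hdecay (t, y)
    simpa [hconst t, norm_iteratedFDeriv_zero] using this
  have hfpos : 0 < ‖f (x, y)‖ := norm_pos_iff.mpr hne
  set T : ℝ := (C + 1) / ‖f (x, y)‖ + |y| + 1 with hT
  have hTnorm : ‖((T, y) : ℝ×ℝ)‖ ≥ T := by
    have : ‖((T, y) : ℝ×ℝ)‖ = max ‖T‖ ‖y‖ := rfl
    rw [this]
    exact le_trans (le_abs_self T) (le_max_left _ _)
  have h1 := key T
  have hTpos : (C + 1) / ‖f (x, y)‖ ≤ T := by
    have : 0 ≤ |y| := abs_nonneg y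
    linarith [hT ▸ le_refl T]
  have : C + 1 ≤ T * ‖f (x, y)‖ := by
    rw [div_le_iff₀ hfpos] at hTpos
    linarith
  nlinarith [mul_le_mul_of_nonneg_right hTnorm (norm_nonneg (f (x,y)))]


lemma pdx_const_mul {f : ℝ×ℝ→ℝ} {p} (hf : DifferentiableAt ℝ f p) (c : ℝ) :
    pdx (fun q => c * f q) p = c * pdx f p := by
  simp [pdx, fderiv_const_mul hf]


/-- Uniqueness lemma underlying the zero curvature representations of the KP flows:
if `2X − N_y + [A₂, N] = 0` as operators on smooth functions, where `N` has Schwartz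
coefficients `a₀, …, a_m`, then `X ≡ 0` and all `a_j ≡ 0`. -/
theorem kp_uniqueness_lemma (m : ℕ) (u : ℝ × ℝ → ℝ) (hu : ContDiff ℝ (⊤ : ℕ∞) u)
    (a : Fin (m + 1) → SchwartzMap (ℝ × ℝ) ℝ) (X : ℝ × ℝ → ℝ)
    (hid : ∀ φ : ℝ × ℝ → ℝ, ContDiff ℝ (⊤ : ℕ∞) φ → ∀ p : ℝ × ℝ,
        2 * X p * φ p - Nop m (fun j => pdy ⇑(a j)) φ p
          + A2op u (Nop m (fun j => ⇑(a j)) φ) p - Nop m (fun j => ⇑(a j)) (A2op u φ) p = 0) :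
    (∀ p : ℝ × ℝ, X p = 0) ∧ ∀ (j : Fin (m + 1)) (p : ℝ × ℝ), a j p = 0 := by
  classical
  have ha : ∀ j : Fin (m+1), ContDiff ℝ ∞ ⇑(a j) := fun j => (a j).smooth ⊤
  have hu' : ContDiff ℝ ∞ u := hu.of_le (by simp)
  choose c hc1 hc2 hc3 using leib u hu'
  have hstep2 : ∀ (l : ℝ) (p : ℝ × ℝ),
      2 * X p - (∑ j : Fin (m+1), pdy ⇑(a j) p * l ^ (m - (j:ℕ)))
        + ((∑ j : Fin (m+1), pdx (pdx ⇑(a j)) p * l ^ (m - (j:ℕ)))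
           + 2 * l * (∑ j : Fin (m+1), pdx ⇑(a j) p * l ^ (m - (j:ℕ)))
           + l^2 * (∑ j : Fin (m+1), (a j) p * l ^ (m - (j:ℕ)))
           + 2 * u p * (∑ j : Fin (m+1), (a j) p * l ^ (m - (j:ℕ))))
        - (∑ j : Fin (m+1), (a j) p * (l ^ (m - (j:ℕ) + 2)
            + ∑ i ∈ Finset.range (m - (j:ℕ) + 1), c (m - (j:ℕ)) i p * l ^ i)) = 0 := by
    intro l p
    set G : ℝ×ℝ → ℝ := fun q => ∑ j : Fin (m+1), (a j) q * l ^ (m - (j:ℕ)) with hG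
    have hGsm : ContDiff ℝ ∞ G := ContDiff.sum fun j _ => (ha j).mul contDiff_const
    have hpdxG : ∀ q, pdx G q = ∑ j : Fin (m+1), pdx ⇑(a j) q * l ^ (m - (j:ℕ)) := by
      intro q
      rw [hG, pdx_sum (fun j _ => ((ha j).differentiable (by norm_num) q).mul_const _)]
      exact Finset.sum_congr rfl fun j _ =>
        pdx_mul_const ((ha j).differentiable (by norm_num) q) _
    have hpdxG2 : pdx (pdx G) p = ∑ j : Fin (m+1), pdx (pdx ⇑(a j)) p * l ^ (m - (j:ℕ)) := by
      rw [show pdx G = fun q => ∑ j : Fin (m+1), pdx ⇑(a j) q * l ^ (m - (j:ℕ)) from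
          funext hpdxG,
        pdx_sum (fun j _ => ((pdx_smooth (ha j)).differentiable (by norm_num) p).mul_const _)]
      exact Finset.sum_congr rfl fun j _ =>
        pdx_mul_const ((pdx_smooth (ha j)).differentiable (by norm_num) p) _
    have hT2 : Nop m (fun j => ⇑(a j)) (Efn l) = fun q => G q * Efn l q := by
      funext q
      rw [Nop, hG]
      dsimp only
      rw [Finset.sum_mul]
      exact Finset.sum_congr rfl fun j _ => by
        rw [congrFun (pdx_iter_Efn l (m - (j:ℕ))) q]; ring
    have hG1sm : ContDiff ℝ ∞ (fun q => pdx G q + l * G q) :=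
      (pdx_smooth hGsm).add (contDiff_const.mul hGsm)
    have hT3 : A2op u (Nop m (fun j => ⇑(a j)) (Efn l)) p
        = ((pdx (pdx G) p + l * pdx G p) + l * (pdx G p + l * G p) + 2 * u p * G p)
            * Efn l p := by
      rw [A2op, hT2]
      have hstep : pdx (fun q => G q * Efn l q) = fun q => (pdx G q + l * G q) * Efn l q :=
        pdx_mul_Efn hGsm l
      rw [hstep, congrFun (pdx_mul_Efn hG1sm l) p]
      have h2 : pdx (fun q => pdx G q + l * G q) p = pdx (pdx G) p + l * pdx G p := by
        rw [pdx_add ((pdx_smooth hGsm).differentiable (by norm_num) p)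
          ((contDiff_const.mul hGsm).differentiable (by norm_num) p),
          pdx_const_mul (hGsm.differentiable (by norm_num) p) l]
      rw [h2]; ring
    have hT1 : Nop m (fun j => pdy ⇑(a j)) (Efn l) p
        = (∑ j : Fin (m+1), pdy ⇑(a j) p * l ^ (m - (j:ℕ))) * Efn l p := by
      rw [Nop, Finset.sum_mul]
      exact Finset.sum_congr rfl fun j _ => by
        rw [congrFun (pdx_iter_Efn l (m - (j:ℕ))) p]; ring
    have hT4 : Nop m (fun j => ⇑(a j)) (A2op u (Efn l)) p
        = (∑ j : Fin (m+1), (a j) p * (l ^ (m - (j:ℕ) + 2)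
            + ∑ i ∈ Finset.range (m - (j:ℕ) + 1), c (m - (j:ℕ)) i p * l ^ i)) * Efn l p := by
      rw [Nop, Finset.sum_mul]
      refine Finset.sum_congr rfl fun j _ => ?_
      have hA2E : A2op u (Efn l) = fun q => pdx (pdx (Efn l)) q + 2 * u q * Efn l q := rfl
      rw [hA2E, congrFun (hc3 (m - (j:ℕ)) l) p]
      ring
    have H := hid (Efn l) (Efn_smooth l ∞) p
    rw [hT1, hT3, hT4] at H
    rw [hpdxG2, hpdxG p] at H
    have hGp : G p = ∑ j : Fin (m+1), (a j) p * l ^ (m - (j:ℕ)) := rfl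
    rw [hGp] at H
    have hfac : (2 * X p - (∑ j : Fin (m+1), pdy ⇑(a j) p * l ^ (m - (j:ℕ)))
        + ((∑ j : Fin (m+1), pdx (pdx ⇑(a j)) p * l ^ (m - (j:ℕ)))
           + 2 * l * (∑ j : Fin (m+1), pdx ⇑(a j) p * l ^ (m - (j:ℕ)))
           + l^2 * (∑ j : Fin (m+1), (a j) p * l ^ (m - (j:ℕ)))
           + 2 * u p * (∑ j : Fin (m+1), (a j) p * l ^ (m - (j:ℕ))))
        - (∑ j : Fin (m+1), (a j) p * (l ^ (m - (j:ℕ) + 2)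
            + ∑ i ∈ Finset.range (m - (j:ℕ) + 1), c (m - (j:ℕ)) i p * l ^ i)))
          * Efn l p = 0 := by
      linear_combination H
    rcases mul_eq_zero.mp hfac with h | h
    · exact h
    · exact absurd h (Efn_pos l p).ne'
  set P : ℝ × ℝ → Polynomial ℝ := fun p =>
    Polynomial.C (2 * X p)
    + ∑ j : Fin (m+1),
        (Polynomial.C (pdx (pdx ⇑(a j)) p + 2 * u p * (a j) p - pdy ⇑(a j) p)
            * Polynomial.X ^ (m - (j:ℕ))
         + Polynomial.C (2 * pdx ⇑(a j) p) * Polynomial.X ^ (m - (j:ℕ) + 1)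
         - ∑ i ∈ Finset.range (m - (j:ℕ) + 1),
             Polynomial.C ((a j) p * c (m - (j:ℕ)) i p) * Polynomial.X ^ i) with hP
  have hPzero : ∀ p, P p = 0 := by
    intro p
    apply Polynomial.funext
    intro l
    rw [Polynomial.eval_zero, hP]
    simp only [Polynomial.eval_add, Polynomial.eval_sub, Polynomial.eval_mul,
      Polynomial.eval_pow, Polynomial.eval_C, Polynomial.eval_X, Polynomial.eval_finset_sum]
    have h2 := hstep2 l p
    rw [← h2]
    have key : ∑ j : Fin (m+1),
        ((pdx (pdx ⇑(a j)) p + 2 * u p * (a j) p - pdy ⇑(a j) p) * l ^ (m - (j:ℕ))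
         + 2 * pdx ⇑(a j) p * l ^ (m - (j:ℕ) + 1)
         - ∑ i ∈ Finset.range (m - (j:ℕ) + 1), (a j) p * c (m - (j:ℕ)) i p * l ^ i)
      = ∑ j : Fin (m+1),
        (- (pdy ⇑(a j) p * l ^ (m - (j:ℕ)))
         + (pdx (pdx ⇑(a j)) p * l ^ (m - (j:ℕ))
            + 2 * l * (pdx ⇑(a j) p * l ^ (m - (j:ℕ)))
            + l^2 * ((a j) p * l ^ (m - (j:ℕ)))
            + 2 * u p * ((a j) p * l ^ (m - (j:ℕ))))
         - (a j) p * (l ^ (m - (j:ℕ) + 2)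
            + ∑ i ∈ Finset.range (m - (j:ℕ) + 1), c (m - (j:ℕ)) i p * l ^ i)) := by
      refine Finset.sum_congr rfl fun j _ => ?_
      have hinner : (a j) p * ∑ i ∈ Finset.range (m - (j:ℕ) + 1), c (m - (j:ℕ)) i p * l ^ i
          = ∑ i ∈ Finset.range (m - (j:ℕ) + 1), (a j) p * c (m - (j:ℕ)) i p * l ^ i := by
        rw [Finset.mul_sum]
        exact Finset.sum_congr rfl fun i _ => by ring
      rw [mul_add ((a j) p), hinner]
      ring
    rw [key]
    simp only [Finset.sum_add_distrib, Finset.sum_sub_distrib, Finset.sum_neg_distrib,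
      ← Finset.mul_sum]
    ring
  have hzero : ∀ n : ℕ, ∀ j : Fin (m+1), (j:ℕ) = n → ∀ p, (a j) p = 0 := by
    intro n
    induction n using Nat.strong_induction_on with
    | _ n IH =>
      intro j hj
      have IH' : ∀ j' : Fin (m+1), (j':ℕ) < (j:ℕ) → ∀ p, (a j') p = 0 := by
        intro j' h
        exact IH (j':ℕ) (by omega) j' rfl
      have hpdx : ∀ p, pdx ⇑(a j) p = 0 := by
        intro p
        have h0 := congrArg (fun q => Polynomial.coeff q (m + 1 - (j:ℕ))) (hPzero p)
        simp only [hP, Polynomial.coeff_add, Polynomial.coeff_sub, Polynomial.finset_sum_coeff,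
          Polynomial.coeff_C_mul, Polynomial.coeff_X_pow, Polynomial.coeff_C,
          Polynomial.coeff_zero] at h0
        have hjlt := j.isLt
        have hother : ∀ b : Fin (m+1), b ∈ Finset.univ → b ≠ j →
            ((((pdx (pdx ⇑(a b)) p + 2 * u p * (a b) p - pdy (⇑(a b)) p)
                * if m + 1 - (j:ℕ) = m - (b:ℕ) then (1:ℝ) else 0)
              + 2 * pdx (⇑(a b)) p * if m + 1 - (j:ℕ) = m - (b:ℕ) + 1 then (1:ℝ) else 0)
              - ∑ i ∈ Finset.range (m - (b:ℕ) + 1), (a b) p * c (m - (b:ℕ)) i p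
                  * if m + 1 - (j:ℕ) = i then (1:ℝ) else 0) = 0 := by
          intro b _ hbj
          have hblt := b.isLt
          have hbne : (b:ℕ) ≠ (j:ℕ) := fun h => hbj (Fin.ext h)
          rw [if_neg (by omega : ¬ (m + 1 - (j:ℕ) = m - (b:ℕ) + 1))]
          have hsum : (∑ i ∈ Finset.range (m - (b:ℕ) + 1), (a b) p * c (m - (b:ℕ)) i p
              * if m + 1 - (j:ℕ) = i then (1:ℝ) else 0) = 0 := by
            refine Finset.sum_eq_zero fun i hi => ?_
            rw [Finset.mem_range] at hi
            by_cases hcase : m + 1 - (j:ℕ) = i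
            · rw [IH' b (by omega) p]; ring
            · rw [if_neg hcase]; ring
          rw [hsum]
          by_cases hcase : m + 1 - (j:ℕ) = m - (b:ℕ)
          · have hb0 : ∀ q, (a b) q = 0 := IH' b (by omega)
            have hcoe : ⇑(a b) = fun _ => 0 := funext hb0
            rw [hb0 p, pdy_of_eq_zero hb0 p]
            rw [show pdx (pdx ⇑(a b)) p = 0 from by rw [hcoe, pdx_zero]; exact congrFun pdx_zero p]
            ring
          · rw [if_neg hcase]; ring
        have hsingle := Finset.sum_eq_single_of_mem (s := Finset.univ)
          (f := fun b : Fin (m+1) =>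
            ((((pdx (pdx ⇑(a b)) p + 2 * u p * (a b) p - pdy (⇑(a b)) p)
                * if m + 1 - (j:ℕ) = m - (b:ℕ) then (1:ℝ) else 0)
              + 2 * pdx (⇑(a b)) p * if m + 1 - (j:ℕ) = m - (b:ℕ) + 1 then (1:ℝ) else 0)
              - ∑ i ∈ Finset.range (m - (b:ℕ) + 1), (a b) p * c (m - (b:ℕ)) i p
                  * if m + 1 - (j:ℕ) = i then (1:ℝ) else 0))
          j (Finset.mem_univ j) hother
        rw [hsingle] at h0
        have e1 : ¬ (m + 1 - (j:ℕ) = m - (j:ℕ)) := by omega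
        have e2 : m + 1 - (j:ℕ) = m - (j:ℕ) + 1 := by omega
        have hsumj : (∑ i ∈ Finset.range (m - (j:ℕ) + 1), (a j) p * c (m - (j:ℕ)) i p
            * if m + 1 - (j:ℕ) = i then (1:ℝ) else 0) = 0 := by
          refine Finset.sum_eq_zero fun i hi => ?_
          rw [Finset.mem_range] at hi
          rw [if_neg (by omega : ¬ m + 1 - (j:ℕ) = i)]
          ring
        simp only [if_neg e1, if_pos e2, hsumj,
          if_neg (show ¬ (m + 1 - (j:ℕ) = 0) by omega)] at h0
        linarith [h0]
      intro p
      exact schwartz_pdx_zero (a j) hpdx p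
  refine ⟨?_, fun j p => hzero (j:ℕ) j rfl p⟩
  intro p
  have hall : ∀ (j : Fin (m+1)) (q : ℝ×ℝ), (a j) q = 0 := fun j q => hzero (j:ℕ) j rfl q
  have H := hid (fun _ => 1) contDiff_const p
  have hN1 : ∀ (φ : ℝ×ℝ→ℝ) (q : ℝ×ℝ), Nop m (fun j => ⇑(a j)) φ q = 0 := by
    intro φ q
    simp only [Nop]
    exact Finset.sum_eq_zero fun j _ => by rw [hall j q]; ring
  have hNy : Nop m (fun j => pdy ⇑(a j)) (fun _ => 1) p = 0 := by
    simp only [Nop]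
    exact Finset.sum_eq_zero fun j _ => by rw [pdy_of_eq_zero (hall j) p]; ring
  have hNfun : Nop m (fun j => ⇑(a j)) (fun _ => (1:ℝ)) = fun _ => 0 := funext (hN1 _)
  have hA2N : A2op u (Nop m (fun j => ⇑(a j)) (fun _ => 1)) p = 0 := by
    rw [A2op, hNfun, pdx_zero]
    rw [show pdx (fun _ : ℝ×ℝ => (0:ℝ)) p = 0 from congrFun pdx_zero p]
    ring
  rw [hNy, hA2N, hN1 _ p] at H
  linarith [H]
end

section
/- Let m be a natural number, h > 0, and let ū : ℤ × ℝ → ℝ be arbitrary. Let X̄, ā₀, …, ā_m : ℤ × ℝ → ℝ be such that each ā_j(n, ·) is differentiable and, for each fixed x̄ ∈ ℝ, ā_j(n, x̄) → 0 as n → +∞. Define, for every function ḡ : ℤ × ℝ → ℝ: (Δḡ)(n, x̄) = ḡ(n+1, x̄) − ḡ(n, x̄), (N̄ḡ) = Σ_{j=0}^{m} ā_j · Δ^{m−j} ḡ, (N̄_x̄ ḡ) = Σ_{j=0}^{m} (∂_x̄ ā_j) · Δ^{m−j} ḡ, and (Ā₁ḡ) = h⁻¹ Δḡ + ū·ḡ.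 If for every function ḡ : ℤ × ℝ → ℝ the identity X̄ḡ − N̄_x̄ ḡ + Ā₁(N̄ḡ) − N̄(Ā₁ḡ) = 0 holds pointwise on ℤ × ℝ, then X̄ ≡ 0 and ā_j ≡ 0 for every j = 0, …, m. -/
/-- Forward difference operator in the discrete variable `n`. -/
def deltaOp (g : ℤ × ℝ → ℝ) : ℤ × ℝ → ℝ := fun p => g (p.1 + 1, p.2) - g p

/-- Partial derivative in the continuous variable `x̄`. -/
noncomputable def pdxbar (f : ℤ × ℝ → ℝ) : ℤ × ℝ → ℝ := fun p => deriv (fun x => f (p.1, x)) p.2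

/-- The difference operator `N̄ = Σ_{j=0}^{m} ā_j Δ^{m−j}`. -/
def Nbar (m : ℕ) (a : Fin (m + 1) → ℤ × ℝ → ℝ) (g : ℤ × ℝ → ℝ) : ℤ × ℝ → ℝ :=
  fun p => ∑ j : Fin (m + 1), a j p * (deltaOp^[m - (j : ℕ)] g) p

/-- The operator `Ā₁ = h⁻¹Δ + ū`. -/
noncomputable def A1bar (h : ℝ) (u g : ℤ × ℝ → ℝ) : ℤ × ℝ → ℝ :=
  fun p => h⁻¹ * deltaOp g p + u p * g p

lemma delta_iter_zero (k : ℕ) (f : ℤ × ℝ → ℝ) (n : ℤ) (x : ℝ)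
    (hf : ∀ i : ℕ, i ≤ k → f (n + (i : ℤ), x) = 0) :
    (deltaOp^[k] f) (n, x) = 0 := by
  induction k generalizing f with
  | zero => simpa using hf 0 le_rfl
  | succ k ih =>
    rw [Function.iterate_succ_apply]
    apply ih
    intro i hi
    show f (n + (i:ℤ) + 1, x) - f (n + (i:ℤ), x) = 0
    have h1 := hf (i+1) (by omega)
    have h2 := hf i (by omega)
    push_cast at h1
    rw [show n + (i:ℤ) + 1 = n + ((i:ℤ)+1) by ring, h1, h2, sub_zero]

lemma delta_iter_top (k : ℕ) (f : ℤ × ℝ → ℝ) (n : ℤ) (x : ℝ)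
    (hf : ∀ i : ℕ, i < k → f (n + (i : ℤ), x) = 0) :
    (deltaOp^[k] f) (n, x) = f (n + (k : ℤ), x) := by
  induction k generalizing f with
  | zero => simp
  | succ k ih =>
    rw [Function.iterate_succ_apply, ih]
    · show f (n + (k:ℤ) + 1, x) - f (n + (k:ℤ), x) = _
      rw [hf k (by omega), sub_zero]
      push_cast; ring_nf
    · intro i hi
      show f (n + (i:ℤ) + 1, x) - f (n + (i:ℤ), x) = 0
      have h1 := hf (i+1) (by omega)
      have h2 := hf i (by omega)
      push_cast at h1
      rw [show n + (i:ℤ) + 1 = n + ((i:ℤ)+1) by ring, h1, h2, sub_zero]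

/-- Uniqueness lemma underlying the zero curvature representations of the
differential-difference KP flows: if `X̄ − N̄_x̄ + [Ā₁, N̄] = 0` as operators, where
the coefficients `ā_j` are differentiable in `x̄` and tend to `0` as `n → +∞`, then
`X̄ ≡ 0` and all `ā_j ≡ 0`. -/
theorem ddkp_uniqueness_lemma (m : ℕ) (h : ℝ) (hh : 0 < h) (ubar : ℤ × ℝ → ℝ)
    (X : ℤ × ℝ → ℝ) (a : Fin (m + 1) → ℤ × ℝ → ℝ)
    (hdiff : ∀ (j : Fin (m + 1)) (n : ℤ), Differentiable ℝ (fun x => a j (n, x)))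
    (hlim : ∀ (j : Fin (m + 1)) (x : ℝ),
      Filter.Tendsto (fun n : ℤ => a j (n, x)) Filter.atTop (nhds 0))
    (hid : ∀ g : ℤ × ℝ → ℝ, ∀ p : ℤ × ℝ,
        X p * g p - Nbar m (fun j => pdxbar (a j)) g p
          + A1bar h ubar (Nbar m a g) p - Nbar m a (A1bar h ubar g) p = 0) :
    (∀ p : ℤ × ℝ, X p = 0) ∧ ∀ (j : Fin (m + 1)) (p : ℤ × ℝ), a j p = 0 := by
  have hinv : (h : ℝ)⁻¹ ≠ 0 := inv_ne_zero hh.ne'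
  have key : ∀ J : ℕ, ∀ j : Fin (m+1), (j : ℕ) = J → ∀ p : ℤ × ℝ, a j p = 0 := by
    intro J
    induction J using Nat.strong_induction_on with
    | _ J ih =>
      intro j hj p
      obtain ⟨n₀, x⟩ := p
      have ihj : ∀ i : Fin (m+1), (i:ℕ) < (j:ℕ) → ∀ q : ℤ × ℝ, a i q = 0 := by
        intro i hi q
        exact ih (i:ℕ) (hj ▸ hi) i rfl q
      have hstep : ∀ n : ℤ, a j (n + 1, x) = a j (n, x) := by
        intro n
        set c : ℤ := n + ((m - (j:ℕ) : ℕ) : ℤ) + 1 with hc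
        set g : ℤ × ℝ → ℝ := fun q => if q.1 = c then 1 else 0 with hg
        have hjm : (j:ℕ) < m + 1 := j.isLt
        -- values of g
        have gval : ∀ (k : ℤ), g (k, x) = if k = c then 1 else 0 := fun k => rfl
        -- N̄_x̄ g at (n,x) is 0
        have h1 : Nbar m (fun i => pdxbar (a i)) g (n, x) = 0 := by
          apply Finset.sum_eq_zero
          intro i _
          rcases lt_or_ge (i:ℕ) (j:ℕ) with hlt | hge
          · have hfz : (fun y => a i (n, y)) = fun _ => (0:ℝ) :=
              funext fun y => ihj i hlt (n, y)
            show pdxbar (a i) (n, x) * _ = 0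
            unfold pdxbar
            simp only
            rw [hfz, deriv_const, zero_mul]
          · have hz : (deltaOp^[m - (i:ℕ)] g) (n, x) = 0 := by
              apply delta_iter_zero
              intro t ht
              rw [gval, if_neg]
              have hmij : m - (i:ℕ) ≤ m - (j:ℕ) := Nat.sub_le_sub_left hge m
              omega
            rw [hz, mul_zero]
        -- N̄ g at (n,x) is 0
        have h2 : Nbar m a g (n, x) = 0 := by
          apply Finset.sum_eq_zero
          intro i _
          rcases lt_or_ge (i:ℕ) (j:ℕ) with hlt | hge
          · rw [ihj i hlt, zero_mul]
          · have hz : (deltaOp^[m - (i:ℕ)] g) (n, x) = 0 := by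
              apply delta_iter_zero
              intro t ht
              rw [gval, if_neg]
              have hmij : m - (i:ℕ) ≤ m - (j:ℕ) := Nat.sub_le_sub_left hge m
              omega
            rw [hz, mul_zero]
        -- N̄ g at (n+1,x)
        have h3 : Nbar m a g (n + 1, x) = a j (n + 1, x) := by
          unfold Nbar
          rw [Finset.sum_eq_single j]
          · have htop : (deltaOp^[m - (j:ℕ)] g) (n + 1, x)
                = g (n + 1 + ((m - (j:ℕ) : ℕ) : ℤ), x) := by
              apply delta_iter_top
              intro t ht
              rw [gval, if_neg]
              omega
            rw [htop, gval, if_pos (by omega), mul_one]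
          · intro i _ hne
            have hvne : (i:ℕ) ≠ (j:ℕ) := Fin.val_ne_of_ne hne
            have him : (i:ℕ) < m + 1 := i.isLt
            rcases lt_or_ge (i:ℕ) (j:ℕ) with hlt | hge
            · rw [ihj i hlt, zero_mul]
            · have hgt : (j:ℕ) < (i:ℕ) := lt_of_le_of_ne hge (Ne.symm hvne)
              have hz : (deltaOp^[m - (i:ℕ)] g) (n + 1, x) = 0 := by
                apply delta_iter_zero
                intro t ht
                rw [gval, if_neg]
                omega
              rw [hz, mul_zero]
          · intro hj'
            exact absurd (Finset.mem_univ j) hj'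
        -- values of A1bar g near n
        have hA : ∀ t : ℕ, t ≤ m - (j:ℕ) →
            A1bar h ubar g (n + (t:ℤ), x) = if t = m - (j:ℕ) then h⁻¹ else 0 := by
          intro t ht
          show h⁻¹ * (g (n + (t:ℤ) + 1, x) - g (n + (t:ℤ), x))
              + ubar (n + (t:ℤ), x) * g (n + (t:ℤ), x) = _
          by_cases hte : t = m - (j:ℕ)
          · rw [gval, gval, if_pos (by omega), if_neg (by omega), if_pos hte]
            ring
          · rw [gval, gval, if_neg (by omega), if_neg (by omega), if_neg hte]
            ring
        -- N̄ (A1bar g) at (n,x)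
        have h4 : Nbar m a (A1bar h ubar g) (n, x) = a j (n, x) * h⁻¹ := by
          unfold Nbar
          rw [Finset.sum_eq_single j]
          · have htop : (deltaOp^[m - (j:ℕ)] (A1bar h ubar g)) (n, x)
                = A1bar h ubar g (n + ((m - (j:ℕ) : ℕ) : ℤ), x) := by
              apply delta_iter_top
              intro t ht
              rw [hA t (le_of_lt ht), if_neg (by omega)]
            rw [htop, hA _ le_rfl, if_pos rfl]
          · intro i _ hne
            have hvne : (i:ℕ) ≠ (j:ℕ) := Fin.val_ne_of_ne hne
            have him : (i:ℕ) < m + 1 := i.isLt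
            rcases lt_or_ge (i:ℕ) (j:ℕ) with hlt | hge
            · rw [ihj i hlt, zero_mul]
            · have hgt : (j:ℕ) < (i:ℕ) := lt_of_le_of_ne hge (Ne.symm hvne)
              have hz : (deltaOp^[m - (i:ℕ)] (A1bar h ubar g)) (n, x) = 0 := by
                apply delta_iter_zero
                intro t ht
                have hsub : m - (i:ℕ) < m - (j:ℕ) := by omega
                rw [hA t (by omega), if_neg (by omega)]
              rw [hz, mul_zero]
          · intro hj'
            exact absurd (Finset.mem_univ j) hj'
        -- A1bar (N̄ g) at (n,x)
        have h5 : A1bar h ubar (Nbar m a g) (n, x) = h⁻¹ * a j (n + 1, x) := by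
          show h⁻¹ * (Nbar m a g (n + 1, x) - Nbar m a g (n, x))
              + ubar (n, x) * Nbar m a g (n, x) = _
          rw [h2, h3]
          ring
        have heq := hid g (n, x)
        rw [h1, h5, h4] at heq
        have hg0 : g (n, x) = 0 := by rw [gval, if_neg (by omega)]
        rw [hg0, mul_zero] at heq
        have hd : h⁻¹ * (a j (n + 1, x) - a j (n, x)) = 0 := by linarith
        have := (mul_eq_zero.mp hd).resolve_left hinv
        linarith
      have hconstN : ∀ k : ℕ, a j (n₀ + (k:ℤ), x) = a j (n₀, x) := by
        intro k
        induction k with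
        | zero => norm_num
        | succ k ihk =>
          rw [show (n₀ + ((k:ℕ)+1 : ℕ) : ℤ) = (n₀ + (k:ℤ)) + 1 by push_cast; ring,
            hstep, ihk]
      have hconst : ∀ k : ℤ, n₀ ≤ k → a j (k, x) = a j (n₀, x) := by
        intro k hk
        have := hconstN (k - n₀).toNat
        rwa [show n₀ + (((k - n₀).toNat : ℕ) : ℤ) = k by omega] at this
      have hten : Filter.Tendsto (fun k : ℤ => a j (k, x)) Filter.atTop
          (nhds (a j (n₀, x))) := by
        refine Filter.Tendsto.congr' ?_ tendsto_const_nhds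
        filter_upwards [Filter.eventually_ge_atTop n₀] with k hk
        exact (hconst k hk).symm
      exact tendsto_nhds_unique hten (hlim j x)
  have ha : ∀ (j : Fin (m+1)) (p : ℤ × ℝ), a j p = 0 := fun j p => key (j:ℕ) j rfl p
  refine ⟨?_, ha⟩
  intro p
  have hN0 : ∀ (gg : ℤ × ℝ → ℝ) (q : ℤ × ℝ), Nbar m a gg q = 0 := by
    intro gg q
    apply Finset.sum_eq_zero
    intro i _
    rw [ha i q, zero_mul]
  have hNx : Nbar m (fun i => pdxbar (a i)) (fun _ => (1:ℝ)) p = 0 := by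
    apply Finset.sum_eq_zero
    intro i _
    have hz : pdxbar (a i) p = 0 := by
      unfold pdxbar
      have hfz : (fun y => a i (p.1, y)) = fun _ => (0:ℝ) := funext fun y => ha i (p.1, y)
      rw [hfz, deriv_const]
    show pdxbar (a i) p * _ = 0
    rw [hz, zero_mul]
  have hA1N : A1bar h ubar (Nbar m a (fun _ => (1:ℝ))) p = 0 := by
    show h⁻¹ * (Nbar m a (fun _ => (1:ℝ)) (p.1 + 1, p.2) - Nbar m a (fun _ => (1:ℝ)) p)
        + ubar p * Nbar m a (fun _ => (1:ℝ)) p = 0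
    simp only [hN0]
    ring
  have hX := hid (fun _ => (1:ℝ)) p
  rw [hNx, hN0, hA1N] at hX
  simpa using hX
end

section
/- Let L be a Lie algebra over ℝ and let K, σ : ℕ → L be families with K 0 = 0 and σ 0 = 0 satisfying, for all integers l, r ≥ 1: ⁅K l, K r⁆ = 0, ⁅K l, σ r⁆ = l • K(l+r−2), and ⁅σ l, σ r⁆ = (l − r) • σ(l+r−2) (the basic structure of the KP flow algebra; the scalars l and l−r act as real numbers). Fix an integer s ≥ 1 and a real number t, and define τ r = (s·t) • K(s+r−2) + σ r for every r. Then for all l, r ≥ 1: (i) ⁅K l, τ r⁆ = l • K(l+r−2) — in particular ⁅K s, τ r⁆ = s • K(s+r−2), which equals the explicit t-derivative of τ r, so each τ r is a symmetry of the equation u_{t_s} = K s; and (ii) ⁅τ l, τ r⁆ = (l − r) • τ(l+r−2). Hence the two families {K l} and {τ r} generate a Lie algebra with the stated basic structure. -/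
/-- From the basic structure of the KP flow algebra
(`⁅K_l, K_r⁆ = 0`, `⁅K_l, σ_r⁆ = l K_{l+r−2}`, `⁅σ_l, σ_r⁆ = (l−r) σ_{l+r−2}`),
the families `{K_l}` and `{τ^s_r = s t_s K_{s+r−2} + σ_r}` satisfy
`⁅K_l, τ_r⁆ = l K_{l+r−2}` and `⁅τ_l, τ_r⁆ = (l−r) τ_{l+r−2}`; in particular each `τ_r`
is a symmetry of `u_{t_s} = K_s`, and the two families generate a Lie algebra with this
basic structure. -/
theorem kp_symmetry_algebra {L : Type*} [LieRing L] [LieAlgebra ℝ L]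
    (K σ : ℕ → L) (hK0 : K 0 = 0) (hσ0 : σ 0 = 0)
    (hKK : ∀ l r : ℕ, 1 ≤ l → 1 ≤ r → ⁅K l, K r⁆ = 0)
    (hKσ : ∀ l r : ℕ, 1 ≤ l → 1 ≤ r → ⁅K l, σ r⁆ = (l : ℝ) • K (l + r - 2))
    (hσσ : ∀ l r : ℕ, 1 ≤ l → 1 ≤ r → ⁅σ l, σ r⁆ = ((l : ℝ) - (r : ℝ)) • σ (l + r - 2))
    (s : ℕ) (hs : 1 ≤ s) (t : ℝ)
    (τ : ℕ → L) (hτ : ∀ r : ℕ, τ r = ((s : ℝ) * t) • K (s + r - 2) + σ r) :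
    (∀ l r : ℕ, 1 ≤ l → 1 ≤ r → ⁅K l, τ r⁆ = (l : ℝ) • K (l + r - 2)) ∧
      (∀ r : ℕ, 1 ≤ r → ⁅K s, τ r⁆ = (s : ℝ) • K (s + r - 2)) ∧
      (∀ l r : ℕ, 1 ≤ l → 1 ≤ r → ⁅τ l, τ r⁆ = ((l : ℝ) - (r : ℝ)) • τ (l + r - 2)) := by
  -- K brackets vanish for all indices (using K 0 = 0)
  have hKK' : ∀ a b : ℕ, ⁅K a, K b⁆ = 0 := by
    intro a b
    rcases Nat.eq_zero_or_pos a with ha | ha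
    · rw [ha, hK0, zero_lie]
    rcases Nat.eq_zero_or_pos b with hb | hb
    · rw [hb, hK0, lie_zero]
    exact hKK a b ha hb
  -- K-σ bracket for all a (using K 0 = 0), r ≥ 1
  have hKσ' : ∀ a r : ℕ, 1 ≤ r → ⁅K a, σ r⁆ = (a : ℝ) • K (a + r - 2) := by
    intro a r hr
    rcases Nat.eq_zero_or_pos a with ha | ha
    · rw [ha, hK0, zero_lie, Nat.cast_zero, zero_smul]
    exact hKσ a r ha hr
  have main1 : ∀ l r : ℕ, 1 ≤ l → 1 ≤ r → ⁅K l, τ r⁆ = (l : ℝ) • K (l + r - 2) := by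
    intro l r hl hr
    rw [hτ r, lie_add, lie_smul, hKK', smul_zero, zero_add, hKσ l r hl hr]
  refine ⟨main1, fun r hr => main1 s r hs hr, ?_⟩
  intro l r hl hr
  have e1 : s + l - 2 + r - 2 = s + (l + r - 2) - 2 := by omega
  have e2 : s + r - 2 + l - 2 = s + (l + r - 2) - 2 := by omega
  have c1 : ((s + l - 2 : ℕ) : ℝ) = (s : ℝ) + l - 2 := by
    push_cast [Nat.cast_sub (show 2 ≤ s + l by omega)]; ring
  have c2 : ((s + r - 2 : ℕ) : ℝ) = (s : ℝ) + r - 2 := by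
    push_cast [Nat.cast_sub (show 2 ≤ s + r by omega)]; ring
  rw [hτ l, hτ r, hτ (l + r - 2)]
  simp only [add_lie, lie_add, lie_smul, smul_lie, hKK', smul_zero, zero_add,
    hKσ' (s + l - 2) r hr]
  have hσK : ⁅σ l, K (s + r - 2)⁆ = -(((s + r - 2 : ℕ) : ℝ) • K (s + r - 2 + l - 2)) := by
    rw [← lie_skew, hKσ' (s + r - 2) l hl]
  rw [hσK, hσσ l r hl hr, e1, e2, c1, c2]
  module
end

section
/- Let L be a Lie algebra over ℝ, h a real number, and let K̄, σ̄ : ℕ → L be families with K̄ 0 = 0 and σ̄ 0 = 0 satisfying, for all integers l, r ≥ 1: ⁅K̄ l, K̄ r⁆ = 0, ⁅K̄ l, σ̄ r⁆ = l • (h • K̄(l+r−1) + K̄(l+r−2)), and ⁅σ̄ l, σ̄ r⁆ = (l − r) • (h • σ̄(l+r−1) + σ̄(l+r−2)) (the basic structure of the differential-difference KP flow algebra). Fix an integer s ≥ 1 and a real number t, and define τ̄ r = (s·t) • (h • K̄(s+r−1) + K̄(s+r−2)) + σ̄ r for every r. Then for all l, r ≥ 1: (i) ⁅K̄ l, τ̄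 r⁆ = l • (h • K̄(l+r−1) + K̄(l+r−2)) — in particular ⁅K̄ s, τ̄ r⁆ equals the explicit t-derivative of τ̄ r, so each τ̄ r is a symmetry of the equation ū_{t̄_s} = K̄ s; and (ii) ⁅τ̄ l, τ̄ r⁆ = (l − r) • (h • τ̄(l+r−1) + τ̄(l+r−2)). -/
/-- From the basic structure of the differential-difference KP flow algebra
(`⁅K̄_l, K̄_r⁆ = 0`, `⁅K̄_l, σ̄_r⁆ = l(h K̄_{l+r−1} + K̄_{l+r−2})`,
`⁅σ̄_l, σ̄_r⁆ = (l−r)(h σ̄_{l+r−1} + σ̄_{l+r−2})`), the families `{K̄_l}` and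
`{τ̄^s_r = s t̄_s (h K̄_{s+r−1} + K̄_{s+r−2}) + σ̄_r}` satisfy
`⁅K̄_l, τ̄_r⁆ = l(h K̄_{l+r−1} + K̄_{l+r−2})` and
`⁅τ̄_l, τ̄_r⁆ = (l−r)(h τ̄_{l+r−1} + τ̄_{l+r−2})`; in particular each `τ̄_r` is a
symmetry of `ū_{t̄_s} = K̄_s`. -/
theorem ddkp_symmetry_algebra {L : Type*} [LieRing L] [LieAlgebra ℝ L] (h : ℝ)
    (K σ : ℕ → L) (hK0 : K 0 = 0) (hσ0 : σ 0 = 0)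
    (hKK : ∀ l r : ℕ, 1 ≤ l → 1 ≤ r → ⁅K l, K r⁆ = 0)
    (hKσ : ∀ l r : ℕ, 1 ≤ l → 1 ≤ r →
      ⁅K l, σ r⁆ = (l : ℝ) • (h • K (l + r - 1) + K (l + r - 2)))
    (hσσ : ∀ l r : ℕ, 1 ≤ l → 1 ≤ r →
      ⁅σ l, σ r⁆ = ((l : ℝ) - (r : ℝ)) • (h • σ (l + r - 1) + σ (l + r - 2)))
    (s : ℕ) (hs : 1 ≤ s) (t : ℝ)
    (τ : ℕ → L)
    (hτ : ∀ r : ℕ, τ r = ((s : ℝ) * t) • (h • K (s + r - 1) + K (s + r - 2)) + σ r) :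
    (∀ l r : ℕ, 1 ≤ l → 1 ≤ r →
        ⁅K l, τ r⁆ = (l : ℝ) • (h • K (l + r - 1) + K (l + r - 2))) ∧
      (∀ r : ℕ, 1 ≤ r → ⁅K s, τ r⁆ = (s : ℝ) • (h • K (s + r - 1) + K (s + r - 2))) ∧
      (∀ l r : ℕ, 1 ≤ l → 1 ≤ r →
        ⁅τ l, τ r⁆ = ((l : ℝ) - (r : ℝ)) • (h • τ (l + r - 1) + τ (l + r - 2))) := by
  have KK' : ∀ x y : ℕ, ⁅K x, K y⁆ = 0 := by
    intro x y
    rcases Nat.eq_zero_or_pos x with hx | hx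
    · subst hx; rw [hK0]; simp
    rcases Nat.eq_zero_or_pos y with hy | hy
    · subst hy; rw [hK0]; simp
    exact hKK x y hx hy
  have Kσ' : ∀ x c : ℕ, ⁅K x, σ (c + 1)⁆ = (x : ℝ) • (h • K (x + c) + K (x + c - 1)) := by
    intro x c
    cases x with
    | zero => rw [hK0]; simp
    | succ x =>
      have e1 : x + 1 + (c + 1) - 1 = x + 1 + c := by omega
      have e2 : x + 1 + (c + 1) - 2 = x + 1 + c - 1 := by omega
      have := hKσ (x + 1) (c + 1) (by omega) (by omega)
      rw [e1, e2] at this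
      exact this
  have part1 : ∀ l r : ℕ, 1 ≤ l → 1 ≤ r →
      ⁅K l, τ r⁆ = (l : ℝ) • (h • K (l + r - 1) + K (l + r - 2)) := by
    intro l r hl hr
    rw [hτ r, lie_add, lie_smul, lie_add, lie_smul, KK', KK', hKσ l r hl hr]
    simp
  refine ⟨part1, fun r hr => part1 s r hs hr, ?_⟩
  intro l r hl hr
  obtain ⟨a, rfl⟩ : ∃ a, s = a + 1 := ⟨s - 1, by omega⟩
  obtain ⟨b, rfl⟩ : ∃ b, l = b + 1 := ⟨l - 1, by omega⟩
  obtain ⟨c, rfl⟩ : ∃ c, r = c + 1 := ⟨r - 1, by omega⟩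
  have i1 : b + 1 + (c + 1) - 1 = b + c + 1 := by omega
  have i2 : b + 1 + (c + 1) - 2 = b + c := by omega
  have i3 : a + 1 + (b + 1) - 1 = a + b + 1 := by omega
  have i4 : a + 1 + (b + 1) - 2 = a + b := by omega
  have i5 : a + 1 + (c + 1) - 1 = a + c + 1 := by omega
  have i6 : a + 1 + (c + 1) - 2 = a + c := by omega
  have i7 : a + 1 + (b + c + 1) - 1 = a + b + c + 1 := by omega
  have i8 : a + 1 + (b + c + 1) - 2 = a + b + c := by omega
  have i9 : a + 1 + (b + c) - 1 = a + b + c := by omega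
  have i10 : a + 1 + (b + c) - 2 = a + b + c - 1 := by omega
  rw [i1, i2, hτ (b + 1), hτ (c + 1), hτ (b + c + 1), hτ (b + c), i3, i4, i5, i6, i7, i8,
    i9, i10]
  have hσK : ∀ x y : ℕ, ⁅σ x, K y⁆ = -⁅K y, σ x⁆ := fun x y => by
    rw [← lie_skew]
  have e1 : ⁅K (a + b + 1), σ (c + 1)⁆
      = ((a + b + 1 : ℕ) : ℝ) • (h • K (a + b + c + 1) + K (a + b + c)) := by
    have := Kσ' (a + b + 1) c
    have j1 : a + b + 1 + c = a + b + c + 1 := by omega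
    have j2 : a + b + 1 + c - 1 = a + b + c := by omega
    rw [j2, j1] at this; exact this
  have e2 : ⁅K (a + b), σ (c + 1)⁆
      = ((a + b : ℕ) : ℝ) • (h • K (a + b + c) + K (a + b + c - 1)) := Kσ' (a + b) c
  have e3 : ⁅K (a + c + 1), σ (b + 1)⁆
      = ((a + c + 1 : ℕ) : ℝ) • (h • K (a + b + c + 1) + K (a + b + c)) := by
    have := Kσ' (a + c + 1) b
    have j1 : a + c + 1 + b = a + b + c + 1 := by omega
    have j2 : a + c + 1 + b - 1 = a + b + c := by omega
    rw [j2, j1] at this; exact this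
  have e4 : ⁅K (a + c), σ (b + 1)⁆
      = ((a + c : ℕ) : ℝ) • (h • K (a + b + c) + K (a + b + c - 1)) := by
    have := Kσ' (a + c) b
    have j1 : a + c + b = a + b + c := by omega
    have j2 : a + c + b - 1 = a + b + c - 1 := by omega
    rw [j2, j1] at this; exact this
  have e5 : ⁅σ (b + 1), σ (c + 1)⁆
      = (((b + 1 : ℕ) : ℝ) - ((c + 1 : ℕ) : ℝ)) • (h • σ (b + c + 1) + σ (b + c)) := by
    have := hσσ (b + 1) (c + 1) (by omega) (by omega)
    rw [i1, i2] at this; exact this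
  simp only [lie_add, add_lie, lie_smul, smul_lie, KK', hσK, e1, e2, e3, e4, e5]
  push_cast
  module
end
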